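/- arXiv:2306.06859 — 2 statements merged into one kernel-verified Lean document; each statement's English description precedes it below -/
import Mathlib

section
/- For all integers N ≥ 1, M ≥ 1 and positive reals x, y, the following product identity holds: Π_{n=0}^{N−1} Π_{m=0}^{M−1} 4·[y·sin²(πn/N) + x·sin²(π(m+1/2)/(2M+1))] = x^M · Π_{j=1}^{N−1} [(4a_j² y + x)(λ₁(j)^M − λ₂(j)^M) − x²(λ₁(j)^{M−1} − λ₂(j)^{M−1})]/(λ₁(j) − λ₂(j)), where a_j = sin(πj/N) and λ_{1,2}(j) = 2a_j(a_j y ± √(a_j² y² + xy)) + x. -/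
open scoped Real
open Polynomial

lemma lemA (n : ℕ) (hn : 0 < n) (w : ℂ) :
    ∏ i ∈ Finset.range n,
      (w - Complex.exp ((Real.pi : ℂ) * (2 * i + 1) / n * Complex.I)) = w ^ n + 1 := by
  have hn' : (n : ℂ) ≠ 0 := Nat.cast_ne_zero.mpr hn.ne'
  have hζ := Complex.isPrimitiveRoot_exp n hn.ne'
  have e : (Complex.exp ((Real.pi : ℂ) / n * Complex.I)) ^ n = -1 := by
    rw [← Complex.exp_nat_mul]
    rw [show (n : ℂ) * ((Real.pi : ℂ) / n * Complex.I) = (Real.pi : ℂ) * Complex.I by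
      field_simp]
    exact Complex.exp_pi_mul_I
  have h := X_pow_sub_C_eq_prod hζ hn e
  have h2 := congrArg (Polynomial.eval w) h
  simp only [Polynomial.eval_sub, Polynomial.eval_pow, Polynomial.eval_X, Polynomial.eval_C,
    Polynomial.eval_prod, sub_neg_eq_add] at h2
  rw [h2]
  apply Finset.prod_congr rfl
  intro i _
  congr 1
  rw [← Complex.exp_nat_mul, ← Complex.exp_add]
  congr 1
  field_simp

lemma factC (z t : ℝ) :
    ((z : ℂ) - Complex.exp ((t : ℂ) * Complex.I)) *
      ((z : ℂ) - Complex.exp (-((t : ℂ) * Complex.I)))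
    = ((z ^ 2 - 2 * z * Real.cos t + 1 : ℝ) : ℂ) := by
  have h1 : -((t : ℂ) * Complex.I) = (-t : ℂ) * Complex.I := by ring
  rw [h1, Complex.exp_mul_I, Complex.exp_mul_I, Complex.sin_neg, Complex.cos_neg]
  have hsc := Complex.sin_sq_add_cos_sq (t : ℂ)
  have hI := Complex.I_sq
  push_cast [Complex.ofReal_cos]
  linear_combination hsc - (Complex.sin (t : ℂ)) ^ 2 * hI

lemma lemB (M : ℕ) (z : ℝ) (hz : 0 ≤ z) :
    (∏ m ∈ Finset.range M,
        (z ^ 2 - 2 * z * Real.cos (Real.pi * (2 * m + 1) / (2 * M + 1)) + 1)) * (z + 1)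
      = z ^ (2 * M + 1) + 1 := by
  set f : ℕ → ℝ := fun m => z ^ 2 - 2 * z * Real.cos (Real.pi * (2 * m + 1) / (2 * M + 1)) + 1
    with hf
  have hprod := lemA (2 * M + 1) (Nat.succ_pos _) (z : ℂ)
  push_cast at hprod
  have h3 : ∀ i : ℕ, (starRingEnd ℂ)
      ((z : ℂ) - Complex.exp ((Real.pi : ℂ) * (2 * i + 1) / (2 * M + 1) * Complex.I))
      = (z : ℂ) - Complex.exp (-((Real.pi : ℂ) * (2 * i + 1) / (2 * M + 1) * Complex.I)) := by
    intro i
    rw [map_sub, Complex.conj_ofReal, ← Complex.exp_conj]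
    congr 2
    simp only [map_neg, map_div₀, map_mul, map_add, map_one, map_ofNat,
      Complex.conj_ofReal, Complex.conj_I, Complex.conj_natCast]
    ring
  have hconj : ∏ i ∈ Finset.range (2 * M + 1),
      ((z : ℂ) - Complex.exp (-((Real.pi : ℂ) * (2 * i + 1) / (2 * M + 1) * Complex.I)))
      = (z : ℂ) ^ (2 * M + 1) + 1 := by
    calc ∏ i ∈ Finset.range (2 * M + 1),
          ((z : ℂ) - Complex.exp (-((Real.pi : ℂ) * (2 * i + 1) / (2 * M + 1) * Complex.I)))
        = ∏ i ∈ Finset.range (2 * M + 1), (starRingEnd ℂ)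
          ((z : ℂ) - Complex.exp ((Real.pi : ℂ) * (2 * i + 1) / (2 * M + 1) * Complex.I)) :=
          Finset.prod_congr rfl fun i _ => (h3 i).symm
      _ = (starRingEnd ℂ) (∏ i ∈ Finset.range (2 * M + 1),
          ((z : ℂ) - Complex.exp ((Real.pi : ℂ) * (2 * i + 1) / (2 * M + 1) * Complex.I))) :=
          (map_prod _ _ _).symm
      _ = (starRingEnd ℂ) ((z : ℂ) ^ (2 * M + 1) + 1) := by rw [hprod]
      _ = (z : ℂ) ^ (2 * M + 1) + 1 := by
          rw [map_add, map_pow, Complex.conj_ofReal, map_one]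
  have key : ∏ m ∈ Finset.range (2 * M + 1), f m = (z ^ (2 * M + 1) + 1) ^ 2 := by
    apply Complex.ofReal_injective
    push_cast
    rw [sq]
    nth_rewrite 2 [← hconj]
    rw [← hprod, ← Finset.prod_mul_distrib]
    refine Finset.prod_congr rfl fun i _ => ?_
    have hfc := factC z (Real.pi * (2 * i + 1) / (2 * M + 1))
    rw [show ((Real.pi * (2 * (i:ℝ) + 1) / (2 * (M:ℝ) + 1) : ℝ) : ℂ)
        = (Real.pi : ℂ) * (2 * (i:ℂ) + 1) / (2 * (M:ℂ) + 1) by push_cast; ring] at hfc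
    rw [hfc]
  -- symmetry to fold the product
  have hsym : ∀ i, i < M → f (M + 1 + i) = f (M - 1 - i) := by
    intro i hi
    have hc : ((M - 1 - i : ℕ) : ℝ) = (M : ℝ) - 1 - (i : ℝ) := by
      push_cast [Nat.cast_sub (by omega : 1 + i ≤ M), Nat.sub_sub]
      ring
    simp only [hf]
    congr 2
    push_cast [hc]
    rw [show Real.pi * (2 * ((M:ℝ) + 1 + (i:ℝ)) + 1) / (2 * (M:ℝ) + 1)
        = 2 * Real.pi - Real.pi * (2 * ((M:ℝ) - 1 - (i:ℝ)) + 1) / (2 * (M:ℝ) + 1) by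
      have : (2 * (M:ℝ) + 1) ≠ 0 := by positivity
      field_simp
      ring]
    rw [Real.cos_two_pi_sub]
  have hfM : f M = (z + 1) ^ 2 := by
    simp only [hf]
    rw [show Real.pi * (2 * (M : ℝ) + 1) / (2 * (M : ℝ) + 1) = Real.pi by
      have : (2 * (M:ℝ) + 1) ≠ 0 := by positivity
      field_simp]
    rw [Real.cos_pi]; ring
  have hsplit : ∏ m ∈ Finset.range (2 * M + 1), f m
      = (∏ m ∈ Finset.range M, f m) ^ 2 * (z + 1) ^ 2 := by
    rw [show 2 * M + 1 = (M + 1) + M by ring, Finset.prod_range_add, Finset.prod_range_succ,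
      hfM]
    have hrefl : ∏ i ∈ Finset.range M, f (M + 1 + i) = ∏ i ∈ Finset.range M, f i := by
      rw [Finset.prod_congr rfl fun i hi => hsym i (Finset.mem_range.mp hi),
        Finset.prod_range_reflect]
    rw [hrefl]; ring
  have hfnn : ∀ m, 0 ≤ f m := by
    intro m
    have h1 := Real.neg_one_le_cos (Real.pi * (2 * (m:ℝ) + 1) / (2 * (M:ℝ) + 1))
    have h2 := Real.cos_le_one (Real.pi * (2 * (m:ℝ) + 1) / (2 * (M:ℝ) + 1))
    simp only [hf]
    nlinarith [sq_nonneg (z - Real.cos (Real.pi * (2 * (m:ℝ) + 1) / (2 * (M:ℝ) + 1))),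
      sq_nonneg z]
  have hPnn : 0 ≤ ∏ m ∈ Finset.range M, f m := Finset.prod_nonneg fun m _ => hfnn m
  have hz1 : (0:ℝ) ≤ z + 1 := by linarith
  have hzn : (0:ℝ) ≤ z ^ (2 * M + 1) + 1 := by positivity
  rw [hsplit] at key
  nlinarith [key, mul_nonneg hPnn hz1]

lemma lemC (M : ℕ) (x z : ℝ) (hx : 0 < x) (hz : 0 < z) :
    ∏ m ∈ Finset.range M,
        ((x * z + x / z) - 2 * x * Real.cos (Real.pi * (2 * m + 1) / (2 * M + 1)))
      = (x / z) ^ M * ((z ^ (2 * M + 1) + 1) / (z + 1)) := by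
  have hz' : z ≠ 0 := hz.ne'
  have hz1 : z + 1 ≠ 0 := by positivity
  have h := lemB M z hz.le
  have h2 : ∏ m ∈ Finset.range M,
      (z ^ 2 - 2 * z * Real.cos (Real.pi * (2 * m + 1) / (2 * M + 1)) + 1)
      = (z ^ (2 * M + 1) + 1) / (z + 1) := by
    rw [← h]; field_simp
  calc ∏ m ∈ Finset.range M,
        ((x * z + x / z) - 2 * x * Real.cos (Real.pi * (2 * m + 1) / (2 * M + 1)))
      = ∏ m ∈ Finset.range M, ((x / z) *
        (z ^ 2 - 2 * z * Real.cos (Real.pi * (2 * m + 1) / (2 * M + 1)) + 1)) := by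
        refine Finset.prod_congr rfl fun m _ => ?_
        field_simp
        ring
    _ = (x / z) ^ M * ((z ^ (2 * M + 1) + 1) / (z + 1)) := by
        rw [Finset.prod_mul_distrib, Finset.prod_const, h2, Finset.card_range]

set_option maxHeartbeats 1000000 in
/-- Equality of the Izmailian–Kenna–Wu double-product formula and the
rotational-symmetry factorization for the spanning tree generating function of
the cobweb lattice `C_{N×M}`. -/
theorem stmt_11 (N M : ℕ) (hN : 1 ≤ N) (hM : 1 ≤ M) (x y : ℝ)
    (hx : 0 < x) (hy : 0 < y) :
    (∏ n ∈ Finset.range N, ∏ m ∈ Finset.range M,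
      4 * (y * Real.sin (Real.pi * n / N) ^ 2 +
        x * Real.sin (Real.pi * (m + 1 / 2) / (2 * M + 1)) ^ 2)) =
    x ^ M * ∏ j ∈ Finset.Icc 1 (N - 1),
      (let a := Real.sin (Real.pi * j / N)
       let l1 := 2 * a * (a * y + Real.sqrt (a ^ 2 * y ^ 2 + x * y)) + x
       let l2 := 2 * a * (a * y - Real.sqrt (a ^ 2 * y ^ 2 + x * y)) + x
       ((4 * a ^ 2 * y + x) * (l1 ^ M - l2 ^ M) - x ^ 2 * (l1 ^ (M - 1) - l2 ^ (M - 1))) /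
         (l1 - l2)) := by
  have hx' : x ≠ 0 := hx.ne'
  -- sin^2 to cos conversion
  have angle : ∀ m : ℕ, Real.sin (Real.pi * (m + 1 / 2) / (2 * M + 1)) ^ 2
      = (1 - Real.cos (Real.pi * (2 * m + 1) / (2 * M + 1))) / 2 := by
    intro m
    have hd : Real.pi * (2 * (m : ℝ) + 1) / (2 * (M : ℝ) + 1)
        = 2 * (Real.pi * ((m : ℝ) + 1 / 2) / (2 * (M : ℝ) + 1)) := by ring
    rw [hd]
    have h1 := Real.cos_two_mul (Real.pi * ((m : ℝ) + 1 / 2) / (2 * (M : ℝ) + 1))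
    have h2 := Real.sin_sq_add_cos_sq (Real.pi * ((m : ℝ) + 1 / 2) / (2 * (M : ℝ) + 1))
    linarith
  -- the inner product over m, parametrized
  have inner : ∀ a z : ℝ, 0 < z → x * z + x / z = 4 * y * a ^ 2 + 2 * x →
      ∏ m ∈ Finset.range M,
        (4 * (y * a ^ 2 + x * Real.sin (Real.pi * (m + 1 / 2) / (2 * M + 1)) ^ 2))
      = (x / z) ^ M * ((z ^ (2 * M + 1) + 1) / (z + 1)) := by
    intro a z hz he
    rw [← lemC M x z hx hz]
    refine Finset.prod_congr rfl fun m _ => ?_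
    rw [angle m]
    linear_combination -he
  -- split off n = 0
  have hset : Finset.range N = insert 0 (Finset.Icc 1 (N - 1)) := by
    ext i
    simp only [Finset.mem_range, Finset.mem_insert, Finset.mem_Icc]
    omega
  rw [hset, Finset.prod_insert (by simp)]
  have h0 : ∏ m ∈ Finset.range M,
      4 * (y * Real.sin (Real.pi * (0 : ℕ) / N) ^ 2 +
        x * Real.sin (Real.pi * (m + 1 / 2) / (2 * M + 1)) ^ 2) = x ^ M := by
    have hs0 : Real.sin (Real.pi * (0 : ℕ) / N) = 0 := by norm_num
    rw [hs0]
    rw [inner 0 1 one_pos (by norm_num [two_mul])]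
    norm_num
  rw [h0]
  congr 1
  refine Finset.prod_congr rfl fun j hj => ?_
  obtain ⟨hj1, hj2⟩ := Finset.mem_Icc.mp hj
  have hjN : j < N := by omega
  have hN0 : (0 : ℝ) < N := by positivity
  have ha : 0 < Real.sin (Real.pi * j / N) := by
    apply Real.sin_pos_of_pos_of_lt_pi
    · have : (1 : ℝ) ≤ (j : ℝ) := by exact_mod_cast hj1
      have := Real.pi_pos
      positivity
    · rw [div_lt_iff₀ hN0]
      have : (j : ℝ) < (N : ℝ) := by exact_mod_cast hjN
      nlinarith [Real.pi_pos]
  set a := Real.sin (Real.pi * j / N) with hadef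
  set s := Real.sqrt (a ^ 2 * y ^ 2 + x * y) with hsdef
  have hsq : s ^ 2 = a ^ 2 * y ^ 2 + x * y := Real.sq_sqrt (by positivity)
  have hspos : 0 < s := Real.sqrt_pos.mpr (by positivity)
  have hl1pos : x < 2 * a * (a * y + s) + x := by nlinarith
  set z : ℝ := (2 * a * (a * y + s) + x) / x with hzdef
  have hz1 : 1 < z := by
    rw [hzdef, lt_div_iff₀ hx]
    linarith
  have hz0 : 0 < z := by linarith
  have hz' : z ≠ 0 := hz0.ne'
  have hl1e : 2 * a * (a * y + s) + x = x * z := by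
    rw [hzdef]; field_simp
  have hl1l2 : (2 * a * (a * y + s) + x) * (2 * a * (a * y - s) + x) = x ^ 2 := by
    nlinarith [hsq]
  have hl2e : 2 * a * (a * y - s) + x = x / z := by
    have hl1ne : 2 * a * (a * y + s) + x ≠ 0 := by nlinarith
    rw [hzdef]
    field_simp
    nlinarith [hl1l2]
  have he : x * z + x / z = 4 * y * a ^ 2 + 2 * x := by
    rw [← hl1e, ← hl2e]; ring
  rw [inner a z hz0 he]
  dsimp only
  rw [hl1e, hl2e]
  have h4 : 4 * a ^ 2 * y + x = x * z + x / z - x := by linarith [he]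
  rw [h4]
  obtain ⟨K, rfl⟩ : ∃ K, M = K + 1 := ⟨M - 1, by omega⟩
  simp only [Nat.add_sub_cancel]
  set W := z ^ K with hWdef
  set X1 := x ^ K with hX1def
  have hW0 : W ≠ 0 := by rw [hWdef]; positivity
  have hp1 : (x * z) ^ (K + 1) = X1 * W * (x * z) := by
    rw [pow_succ, hWdef, hX1def, mul_pow]
  have hp2 : (x / z) ^ (K + 1) = X1 / W * (x / z) := by
    rw [pow_succ, hWdef, hX1def, div_pow]
  have hp3 : z ^ (2 * (K + 1) + 1) = W ^ 2 * z ^ 3 := by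
    rw [show 2 * (K + 1) + 1 = K * 2 + 3 by ring, pow_add, pow_mul, hWdef]
  have hq1 : (x * z) ^ K = X1 * W := by rw [hWdef, hX1def, mul_pow]
  have hq2 : (x / z) ^ K = X1 / W := by rw [hWdef, hX1def, div_pow]
  rw [hp1, hp2, hp3, hq1, hq2]
  clear_value a s z W X1
  have hne : x * z - x / z ≠ 0 := by
    have h1 : x / z < x := by
      rw [div_lt_iff₀ hz0]; nlinarith
    have h2 : x < x * z := by nlinarith
    intro hcon
    nlinarith [hcon]
  have hz1' : z + 1 ≠ 0 := by positivity
  rw [eq_div_iff hne]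
  field_simp
  ring
end

section
/- Let D be a finite weighted digraph with vertex set {v₁,…,v_n} and Laplacian L(D) = diag(out-degrees) − A(D). Then for each k, det(L(D) with row k and column k deleted) equals the sum, over all directed spanning trees T of D rooted at v_k (in which v_k has out-degree 0 and every other vertex out-degree 1), of the product of the weights of the arcs of T. -/
open scoped BigOperators

noncomputable section

/-- Symmetrized weight function on unordered pairs. -/
def symWeight {V : Type*} (w : V → V → ℝ) : Sym2 V → ℝ :=
  Sym2.lift ⟨fun a b => (w a b + w b a) / 2, fun a b => by simp [add_comm]⟩

/-- The simple graph underlying a weight function: edges are pairs of nonzero weight. -/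
def wGraph {V : Type*} (w : V → V → ℝ) : SimpleGraph V :=
  SimpleGraph.fromRel fun a b => w a b ≠ 0

open Classical in
/-- Weighted spanning tree enumerator: sum over spanning trees of the product of
edge weights. -/
def treeSum {V : Type*} [Fintype V] (w : V → V → ℝ) : ℝ :=
  ∑ T ∈ Finset.univ.filter
      (fun T : Finset (Sym2 V) =>
        ↑T ⊆ (wGraph w).edgeSet ∧ (SimpleGraph.fromEdgeSet (↑T : Set (Sym2 V))).IsTree),
    ∏ e ∈ T, symWeight w e

open Classical in
/-- Number of spanning trees of a simple graph. -/
def treeCount {V : Type*} [Fintype V] (G : SimpleGraph V) : ℕ :=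
  (Finset.univ.filter
      (fun T : Finset (Sym2 V) =>
        ↑T ⊆ G.edgeSet ∧ (SimpleGraph.fromEdgeSet (↑T : Set (Sym2 V))).IsTree)).card

open Classical in
/-- Laplacian matrix of a weight function (weighted degrees on the diagonal). -/
def lap {V : Type*} [Fintype V] (w : V → V → ℝ) : Matrix V V ℝ :=
  Matrix.of fun a b => if a = b then ∑ c, w a c else - w a b

open Classical in
/-- `T` is the arc set of a directed spanning tree (arborescence) rooted at `r`:
the root has out-degree 0, every other vertex has out-degree 1, and every vertex
reaches the root. -/
def IsArbor {V : Type*} (T : Finset (V × V)) (r : V) : Prop :=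
  (∀ a ∈ T, a.1 ≠ a.2) ∧
  (∀ a ∈ T, a.1 ≠ r) ∧
  (∀ v, v ≠ r → (T.filter (fun a => a.1 = v)).card = 1) ∧
  (∀ v : V, Relation.ReflTransGen (fun a b => (a, b) ∈ T) v r)

open Classical in
/-- Sum of weights of directed spanning trees rooted at `r`. -/
def arbSum {V : Type*} [Fintype V] {R : Type*} [CommSemiring R]
    (w : V → V → R) (r : V) : R :=
  ∑ T ∈ Finset.univ.filter (fun T : Finset (V × V) => IsArbor T r), ∏ a ∈ T, w a.1 a.2

end


section MTTaux
set_option linter.unusedSectionVars false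
set_option maxHeartbeats 1000000

namespace MTT
open Finset
variable {V : Type*} [Fintype V] [DecidableEq V] {r : V}

def Fext (r : V) (f : {v : V // v ≠ r} → V) : V → V :=
  fun v => if h : v = r then r else f ⟨v, h⟩

lemma Fext_apply (r : V) (f : {v : V // v ≠ r} → V) (a : {v : V // v ≠ r}) :
    Fext r f ↑a = f a := by
  simp [Fext, a.2]

def Reaches (r : V) (f : {v : V // v ≠ r} → V) : Prop :=
  ∀ v : V, ∃ k, (Fext r f)^[k] v = r

lemma det_zero_of_not_reaches (f : {v : V // v ≠ r} → V)
    (h : ¬ Reaches r f) :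
    (Matrix.of fun a b : {v : V // v ≠ r} =>
      (if (a : V) = (b : V) then (1:ℝ) else 0) - (if f a = (b : V) then 1 else 0)).det = 0 := by
  classical
  simp only [Reaches, not_forall] at h
  obtain ⟨v, hv⟩ := h
  push_neg at hv
  set F := Fext r f with hF
  have key : ∃ c, (∀ k, F^[k] c ≠ r) ∧ ∃ p, 0 < p ∧ F^[p] c = c := by
    obtain ⟨i0, j0, hne, hij⟩ := Fintype.exists_ne_map_eq_of_card_lt
      (fun k : Fin (Fintype.card V + 1) => F^[(k : ℕ)] v) (by simp)
    obtain ⟨i, j, hijlt, hijeq⟩ : ∃ i j : ℕ, i < j ∧ F^[i] v = F^[j] v := by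
      rcases lt_or_gt_of_ne hne with h1 | h1
      · exact ⟨i0, j0, Fin.lt_iff_val_lt_val.mp h1, hij⟩
      · exact ⟨j0, i0, Fin.lt_iff_val_lt_val.mp h1, hij.symm⟩
    refine ⟨F^[i] v, ?_, j - i, Nat.sub_pos_of_lt hijlt, ?_⟩
    · intro k
      rw [← Function.iterate_add_apply]
      exact hv _
    · rw [← Function.iterate_add_apply, Nat.sub_add_cancel hijlt.le, ← hijeq]
  obtain ⟨c, hcr0, p, hppos, hper⟩ := key
  set e : ℕ → V := fun k => F^[k] c with he
  have hcr : ∀ k, e k ≠ r := hcr0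
  have emod : ∀ k, e k = e (k % p) := by
    intro k
    show F^[k] c = F^[k % p] c
    conv_lhs => rw [← Nat.mod_add_div k p]
    rw [Function.iterate_add_apply, Function.iterate_mul, Function.iterate_fixed hper]
  have eadd : ∀ k, e (k + p) = e k := by
    intro k
    show F^[k + p] c = F^[k] c
    rw [Function.iterate_add_apply, hper]
  set eS : ℕ → {v : V // v ≠ r} := fun k => ⟨e k, hcr k⟩ with heS
  set g : {v : V // v ≠ r} → {v : V // v ≠ r} :=
    fun a => if h : f a = r then a else ⟨f a, h⟩ with hg
  have hfe : ∀ k, f (eS k) = e (k + 1) := by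
    intro k
    have h1 : F (e k) = e (k + 1) := (Function.iterate_succ_apply' F k c).symm
    rw [← h1, hF]
    exact (Fext_apply r f (eS k)).symm
  have hgk : ∀ k, g (eS k) = eS (k + 1) := by
    intro k
    rw [hg]
    simp only [hfe k]
    rw [dif_neg (hcr (k+1))]
  set CS : Finset {v : V // v ≠ r} := (Finset.range p).image eS with hCS
  have himg : CS.image g = CS := by
    ext b
    simp only [hCS, Finset.mem_image, Finset.mem_range]
    constructor
    · rintro ⟨a, ⟨k, hk, rfl⟩, rfl⟩
      refine ⟨(k + 1) % p, Nat.mod_lt _ hppos, ?_⟩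
      rw [hgk k]
      exact Subtype.ext (emod (k+1)).symm
    · rintro ⟨m, hm, rfl⟩
      refine ⟨eS ((m + p - 1) % p), ⟨(m + p - 1) % p, Nat.mod_lt _ hppos, rfl⟩, ?_⟩
      rw [hgk]
      apply Subtype.ext
      show e ((m + p - 1) % p + 1) = e m
      rw [emod ((m + p - 1) % p + 1)]
      rw [Nat.mod_add_mod, Nat.sub_add_cancel (by omega : 1 ≤ m + p),
        Nat.add_mod_right]
      exact (emod m).symm
  have hginj : Set.InjOn g CS := by
    rintro a1 ha1 a2 ha2 hgeq
    simp only [hCS, Finset.coe_image, Set.mem_image, Finset.mem_coe, Finset.mem_range] at ha1 ha2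
    obtain ⟨k1, _, rfl⟩ := ha1
    obtain ⟨k2, _, rfl⟩ := ha2
    rw [hgk, hgk] at hgeq
    have h1 : e (k1 + 1) = e (k2 + 1) := congrArg Subtype.val hgeq
    have h2 : e k1 = e k2 := by
      have e1 : e (k1 + p) = F^[p-1] (e (k1 + 1)) := by
        show F^[k1 + p] c = F^[p-1] (F^[k1+1] c)
        rw [← Function.iterate_add_apply]
        congr 1
        omega
      have e2 : e (k2 + p) = F^[p-1] (e (k2 + 1)) := by
        show F^[k2 + p] c = F^[p-1] (F^[k2+1] c)
        rw [← Function.iterate_add_apply]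
        congr 1
        omega
      rw [← eadd k1, ← eadd k2, e1, e2, h1]
    exact Subtype.ext h2
  -- now the determinant is zero
  rw [← Matrix.exists_vecMul_eq_zero_iff]
  refine ⟨(fun a => if a ∈ CS then (1:ℝ) else 0), ?_, ?_⟩
  · intro h0
    have h1 := congrFun h0 (eS 0)
    have h2 : eS 0 ∈ CS := Finset.mem_image_of_mem _ (Finset.mem_range.mpr hppos)
    simp [h2] at h1
  · funext b
    simp only [Matrix.vecMul, dotProduct, Matrix.of_apply, Pi.zero_apply]
    have hstep : ∀ x : {v : V // v ≠ r}, (if x ∈ CS then (1:ℝ) else 0) *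
        ((if (x : V) = (b : V) then (1:ℝ) else 0) - (if f x = (b : V) then 1 else 0))
        = if x ∈ CS then ((if (x : V) = (b : V) then (1:ℝ) else 0)
            - (if f x = (b : V) then 1 else 0)) else 0 := by
      intro x; rw [ite_mul, one_mul, zero_mul]
    simp only [hstep]
    rw [Finset.sum_ite_mem, Finset.univ_inter, Finset.sum_sub_distrib]
    have hc1 : ∀ a : {v : V // v ≠ r}, ((a : V) = (b : V)) = (a = b) := by
      intro a; simp [Subtype.ext_iff]
    have h1 : (∑ a ∈ CS, if (a : V) = (b : V) then (1:ℝ) else 0)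
        = if b ∈ CS then 1 else 0 := by
      simp only [hc1]
      exact Finset.sum_ite_eq' CS b (fun _ => (1:ℝ))
    have h2 : (∑ a ∈ CS, if f a = (b : V) then (1:ℝ) else 0)
        = if b ∈ CS then 1 else 0 := by
      have hga : ∀ a ∈ CS, (if f a = (b : V) then (1:ℝ) else 0)
          = (if g a = b then (1:ℝ) else 0) := by
        intro a ha
        simp only [hCS, Finset.mem_image, Finset.mem_range] at ha
        obtain ⟨k, hk, rfl⟩ := ha
        rw [hgk, hfe]
        congr 1
        simp [eS, Subtype.ext_iff]
      rw [Finset.sum_congr rfl hga]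
      have himg2 := Finset.sum_image (g := g) (s := CS)
        (f := fun a' => if a' = b then (1:ℝ) else 0)
        (fun x hx y hy hxy => hginj hx hy hxy)
      rw [himg] at himg2
      rw [← himg2]
      exact Finset.sum_ite_eq' CS b (fun _ => (1:ℝ))
    rw [h1, h2, sub_self]

lemma det_one_of_reaches (f : {v : V // v ≠ r} → V) (h : Reaches r f) :
    (Matrix.of fun a b : {v : V // v ≠ r} =>
      (if (a : V) = (b : V) then (1:ℝ) else 0) - (if f a = (b : V) then 1 else 0)).det = 1 := by
  classical
  set M := (Matrix.of fun a b : {v : V // v ≠ r} =>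
      (if (a : V) = (b : V) then (1:ℝ) else 0) - (if f a = (b : V) then 1 else 0)) with hM
  set rk : V → ℕ := fun v => Nat.find (h v) with hrk
  have hrkspec : ∀ v : V, (Fext r f)^[rk v] v = r := fun v => Nat.find_spec (h v)
  have hrkmin : ∀ (v : V) (m : ℕ), (Fext r f)^[m] v = r → rk v ≤ m :=
    fun v m hm => Nat.find_le hm
  have hrk0 : ∀ a : {v : V // v ≠ r}, rk (a : V) ≠ 0 := by
    intro a h0
    have h1 := hrkspec (a : V)
    rw [h0] at h1
    exact a.2 h1
  have hlt : ∀ (a : {v : V // v ≠ r}) (b : V), f a = b → rk b < rk (a : V) := by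
    intro a b hb
    have hspec := hrkspec (a : V)
    obtain ⟨m, hm⟩ : ∃ m, rk (a : V) = m + 1 :=
      ⟨rk (a:V) - 1, (Nat.succ_pred_eq_of_pos (Nat.pos_of_ne_zero (hrk0 a))).symm⟩
    have h1 : (Fext r f)^[m] b = r := by
      rw [hm, Function.iterate_succ_apply, Fext_apply, hb] at hspec
      exact hspec
    have := hrkmin b m h1
    omega
  set β : {v : V // v ≠ r} → ℤ := fun a => -(rk (a : V) : ℤ) with hβ
  have hbt : M.BlockTriangular β := by
    intro i j hij
    have hrij : rk (i : V) < rk (j : V) := by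
      simp only [hβ, neg_lt_neg_iff, Int.ofNat_lt] at hij
      exact_mod_cast hij
    have h1 : (i : V) ≠ (j : V) := fun heq => by rw [heq] at hrij; omega
    have h2 : f i ≠ (j : V) := fun heq => by
      have := hlt i _ heq; omega
    simp [hM, h1, h2]
  rw [hbt.det]
  apply Finset.prod_eq_one
  intro x hx
  have : M.toSquareBlock β x = 1 := by
    ext i j
    by_cases hij : i = j
    · subst hij
      have : f (i : {v : V // v ≠ r}) ≠ ((i : {v : V // v ≠ r}) : V) := fun hc => by
        have := hlt i _ hc; omega
      simp [Matrix.toSquareBlock_def, hM, this]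
    · have h1 : ((i : {v : V // v ≠ r}) : V) ≠ ((j : {v : V // v ≠ r}) : V) := by
        intro hc
        exact hij (Subtype.ext (Subtype.ext hc))
      have h2 : f (i : {v : V // v ≠ r}) ≠ ((j : {v : V // v ≠ r}) : V) := by
        intro hc
        have h3 := hlt _ _ hc
        have hbij : β ↑i = β ↑j := i.2.trans j.2.symm
        simp only [hβ, neg_inj, Nat.cast_inj] at hbij
        omega
      simp [Matrix.toSquareBlock_def, hM, h1, h2, Matrix.one_apply_ne hij]
  rw [this, Matrix.det_one]
lemma det_expand (w : V → V → ℝ) (hdiag : ∀ v, w v v = 0) (r : V) :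
    (Matrix.of fun a b : {v : V // v ≠ r} =>
        (if (a : V) = (b : V) then ∑ c, w a c else - w a b)).det
    = ∑ f : {v : V // v ≠ r} → V,
        (∏ a : {v : V // v ≠ r}, w (a : V) (f a)) *
        (Matrix.of fun a b : {v : V // v ≠ r} =>
          (if (a : V) = (b : V) then (1:ℝ) else 0) - (if f a = (b : V) then 1 else 0)).det := by
  classical
  set S := {v : V // v ≠ r}
  set u : S → V → (S → ℝ) := fun a c b =>
    (if (a : V) = (b : V) then (1:ℝ) else 0) - (if c = (b : V) then 1 else 0) with hu
  have hrow : (Matrix.of fun a b : S =>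
      (if (a : V) = (b : V) then ∑ c, w a c else - w a b))
      = fun a : S => ∑ c, w (a : V) c • u a c := by
    funext a b
    simp only [Matrix.of_apply, Finset.sum_apply, hu, Pi.smul_apply, smul_eq_mul]
    have hsum2 : (∑ c, w (a:V) c * (if c = (b:V) then (1:ℝ) else 0)) = w (a:V) (b:V) := by
      simp [mul_ite, mul_one, mul_zero]
    by_cases hab : (a : V) = (b : V)
    · simp only [if_pos hab, mul_sub, mul_one, Finset.sum_sub_distrib, hsum2]
      rw [← hab, hdiag, sub_zero]
    · simp only [if_neg hab, mul_sub, mul_zero, mul_one, Finset.sum_sub_distrib, hsum2,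
        Finset.sum_const_zero, zero_sub]
      rw [Finset.sum_congr rfl (fun c _ => (mul_neg _ _ : w (a:V) c * -(if c = (b:V) then (1:ℝ) else 0) = _)),
        Finset.sum_neg_distrib]
      rw [hsum2]
  have hdet : ∀ N : Matrix S S ℝ,
      N.det = (Matrix.detRowAlternating (R := ℝ) (n := S)).toMultilinearMap N := fun _ => rfl
  rw [hdet, hrow]
  rw [(Matrix.detRowAlternating (R := ℝ) (n := S)).toMultilinearMap.map_sum
    (g := fun a c => w (a : V) c • u a c)]
  apply Finset.sum_congr rfl
  intro f _
  rw [(Matrix.detRowAlternating (R := ℝ) (n := S)).toMultilinearMap.map_smul_univ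
    (fun a => w (a : V) (f a)) (fun a => u a (f a))]
  rw [smul_eq_mul]
  congr 1
def Tf (r : V) (f : {v : V // v ≠ r} → V) : Finset (V × V) :=
  Finset.univ.image (fun a : {v : V // v ≠ r} => ((a : V), f a))

open Classical in
noncomputable def fnOf (r : V) (T : Finset (V × V)) : {v : V // v ≠ r} → V :=
  fun a => if h : (T.filter (fun p => p.1 = (a : V))).card = 1
    then (Finset.card_eq_one.mp h).choose.2 else r

lemma fnOf_spec {T : Finset (V × V)} {a : {v : V // v ≠ r}}
    (h : (T.filter (fun p => p.1 = (a : V))).card = 1) :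
    ((a : V), fnOf r T a) ∈ T ∧ ∀ b, ((a : V), b) ∈ T → b = fnOf r T a := by
  classical
  set x := (Finset.card_eq_one.mp h).choose with hxd
  have hd : fnOf r T a = x.2 := dif_pos h
  have hx : T.filter (fun p => p.1 = (a : V)) = {x} := (Finset.card_eq_one.mp h).choose_spec
  have hxm : x ∈ T ∧ x.1 = (a : V) := by
    have h1 : x ∈ T.filter (fun p => p.1 = (a : V)) := by
      rw [hx]; exact Finset.mem_singleton_self x
    simpa using h1
  refine ⟨?_, ?_⟩
  · have h2 : ((a : V), fnOf r T a) = x := by rw [hd, ← hxm.2]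
    rw [h2]; exact hxm.1
  · intro b hb
    have h1 : ((a : V), b) ∈ T.filter (fun p => p.1 = (a : V)) :=
      Finset.mem_filter.mpr ⟨hb, rfl⟩
    rw [hx, Finset.mem_singleton] at h1
    rw [hd, ← h1]

lemma filter_Tf (f : {v : V // v ≠ r} → V) (a : {v : V // v ≠ r}) :
    (Tf r f).filter (fun p => p.1 = (a : V)) = {((a : V), f a)} := by
  classical
  ext p
  simp only [Finset.mem_filter, Tf, Finset.mem_image, Finset.mem_univ, true_and,
    Finset.mem_singleton]
  constructor
  · rintro ⟨⟨b, rfl⟩, h2⟩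
    have : b = a := Subtype.ext h2
    rw [this]
  · rintro rfl
    exact ⟨⟨a, rfl⟩, rfl⟩

lemma arbor_of_reaches (f : {v : V // v ≠ r} → V) (h : Reaches r f) :
    IsArbor (Tf r f) r := by
  classical
  have hfix : ∀ a : {v : V // v ≠ r}, f a ≠ (a : V) := by
    intro a hfa
    obtain ⟨k, hk⟩ := h (a : V)
    have : Fext r f (a : V) = (a : V) := by rw [Fext_apply, hfa]
    rw [Function.iterate_fixed this k] at hk
    exact a.2 hk
  refine ⟨?_, ?_, ?_, ?_⟩
  · rintro p hp
    simp only [Tf, Finset.mem_image, Finset.mem_univ, true_and] at hp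
    obtain ⟨a, rfl⟩ := hp
    exact fun hc => hfix a hc.symm
  · rintro p hp
    simp only [Tf, Finset.mem_image, Finset.mem_univ, true_and] at hp
    obtain ⟨a, rfl⟩ := hp
    exact a.2
  · intro v hv
    rw [Finset.filter_congr_decidable, filter_Tf f ⟨v, hv⟩]
    simp
  · intro v
    obtain ⟨k, hk⟩ := h v
    clear hfix
    induction k generalizing v with
    | zero => rw [show v = r from hk]
    | succ n ih =>
      by_cases hvr : v = r
      · rw [hvr]
      · have hstep : (v, f ⟨v, hvr⟩) ∈ Tf r f :=
          Finset.mem_image_of_mem _ (Finset.mem_univ (⟨v, hvr⟩ : {v : V // v ≠ r}))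
        have hk' : (Fext r f)^[n] (f ⟨v, hvr⟩) = r := by
          rw [Function.iterate_succ_apply] at hk
          rwa [show Fext r f v = f ⟨v, hvr⟩ from Fext_apply r f ⟨v, hvr⟩] at hk
        exact Relation.ReflTransGen.head hstep (ih _ hk')

lemma reaches_of_arbor (T : Finset (V × V)) (h : IsArbor T r) :
    Reaches r (fnOf r T) := by
  classical
  intro v
  have h4 := h.2.2.2 v
  induction h4 using Relation.ReflTransGen.head_induction_on with
  | refl => exact ⟨0, rfl⟩
  | head hstep _ ih =>
    rename_i v' c' _
    obtain ⟨k, hk⟩ := ih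
    have hvr : v' ≠ r := h.2.1 _ hstep
    have hcard : (T.filter (fun p => p.1 = ((⟨v', hvr⟩ : {v : V // v ≠ r}) : V))).card = 1 := by
      rw [← Finset.filter_congr_decidable]
      exact h.2.2.1 v' hvr
    have huniq := (fnOf_spec hcard).2 c' hstep
    refine ⟨k + 1, ?_⟩
    rw [Function.iterate_succ_apply,
      show Fext r (fnOf r T) v' = fnOf r T ⟨v', hvr⟩ from Fext_apply r _ ⟨v', hvr⟩,
      ← huniq, hk]

lemma fnOf_Tf (f : {v : V // v ≠ r} → V) : fnOf r (Tf r f) = f := by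
  classical
  funext a
  have hcard : ((Tf r f).filter (fun p => p.1 = (a : V))).card = 1 := by
    rw [filter_Tf]; simp
  have := (fnOf_spec hcard).2 (f a) (Finset.mem_image_of_mem _ (Finset.mem_univ a))
  exact this.symm

lemma Tf_fnOf (T : Finset (V × V)) (h : IsArbor T r) : Tf r (fnOf r T) = T := by
  classical
  have hcard : ∀ a : {v : V // v ≠ r},
      (T.filter (fun p => p.1 = (a : V))).card = 1 := by
    intro a
    rw [← Finset.filter_congr_decidable]
    exact h.2.2.1 (a : V) a.2
  ext p
  simp only [Tf, Finset.mem_image, Finset.mem_univ, true_and]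
  constructor
  · rintro ⟨a, rfl⟩
    exact (fnOf_spec (hcard a)).1
  · intro hp
    have hpr : p.1 ≠ r := h.2.1 p hp
    refine ⟨⟨p.1, hpr⟩, ?_⟩
    have h2 : p.2 = fnOf r T ⟨p.1, hpr⟩ := (fnOf_spec (hcard ⟨p.1, hpr⟩)).2 p.2 (by simpa using hp)
    rw [← h2]

open Classical in
lemma sum_eq_arbSum (w : V → V → ℝ) (r : V) :
    (∑ f ∈ Finset.univ.filter (fun f : {v : V // v ≠ r} → V => Reaches r f),
      ∏ a : {v : V // v ≠ r}, w (a : V) (f a)) = arbSum w r := by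
  classical
  rw [arbSum]
  refine Finset.sum_nbij' (i := fun f => Tf r f) (j := fun T => fnOf r T)
    ?_ ?_ ?_ ?_ ?_
  · intro f hf
    simp only [Finset.mem_filter, Finset.mem_univ, true_and] at hf ⊢
    exact arbor_of_reaches f hf
  · intro T hT
    simp only [Finset.mem_filter, Finset.mem_univ, true_and] at hT ⊢
    exact reaches_of_arbor T hT
  · intro f _
    exact fnOf_Tf f
  · intro T hT
    simp only [Finset.mem_filter, Finset.mem_univ, true_and] at hT
    exact Tf_fnOf T hT
  · intro f _
    unfold Tf
    rw [Finset.prod_image (fun x _ y _ hxy => Subtype.ext (congrArg Prod.fst hxy))]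

end MTT
end MTTaux

open Classical in
/-- Directed Matrix-Tree Theorem: for a weighted digraph `D` with Laplacian
`L(D) = diag(out-degrees) - A(D)`, the principal minor obtained by deleting the row
and column of a vertex `r` equals the sum of weights of directed spanning trees of
`D` rooted at `r` (root out-degree 0, every other vertex out-degree 1). -/
theorem stmt_13 {V : Type*} [Fintype V] [DecidableEq V]
    (w : V → V → ℝ) (hdiag : ∀ v, w v v = 0) (r : V) :
    (Matrix.of fun a b : {v : V // v ≠ r} =>
        (if (a : V) = (b : V) then ∑ c, w a c else - w a b)).det
      = arbSum w r := by
  classical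
  rw [MTT.det_expand w hdiag r]
  have hsplit : ∀ f : {v : V // v ≠ r} → V,
      (Matrix.of fun a b : {v : V // v ≠ r} =>
        (if (a : V) = (b : V) then (1:ℝ) else 0) - (if f a = (b : V) then 1 else 0)).det
      = if MTT.Reaches r f then 1 else 0 := by
    intro f
    by_cases h : MTT.Reaches r f
    · rw [if_pos h, MTT.det_one_of_reaches f h]
    · rw [if_neg h, MTT.det_zero_of_not_reaches f h]
  calc (∑ f : {v : V // v ≠ r} → V,
        (∏ a : {v : V // v ≠ r}, w (a : V) (f a)) *
        (Matrix.of fun a b : {v : V // v ≠ r} =>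
          (if (a : V) = (b : V) then (1:ℝ) else 0) - (if f a = (b : V) then 1 else 0)).det)
      = ∑ f : {v : V // v ≠ r} → V,
          if MTT.Reaches r f then ∏ a : {v : V // v ≠ r}, w (a : V) (f a) else 0 := by
        refine Finset.sum_congr rfl fun f _ => ?_
        rw [hsplit f, mul_ite, mul_one, mul_zero]
    _ = ∑ f ∈ Finset.univ.filter (fun f : {v : V // v ≠ r} → V => MTT.Reaches r f),
          ∏ a : {v : V // v ≠ r}, w (a : V) (f a) := (Finset.sum_filter _ _).symm
    _ = arbSum w r := MTT.sum_eq_arbSum w r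
end
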